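/- arXiv:1908.08793 — 6 statements merged into one kernel-verified Lean document; each statement's English description precedes it below -/
import Mathlib

section
/- Under the contraction property of the operator T u(x) = min_{a∈A}[c(x,a) + ∫ u dp̂(·|x,a)] with modulus β = 1 − λ(X) < 1, there exists a unique fixed point h ∈ C_b(X) of T, and h satisfies the average cost optimality equation h(x) + ρ = min_{a∈A}[ c(x,a) + ∫_X h(y) p(dy|x,a) ], where ρ = ∫_X h dλ. -/
open MeasureTheory ProbabilityTheory BoundedContinuousFunction

/-! A fixed point `h` of `T` is a bounded function, so `a ↦ c (x, a) + ∫ h dp(·|x,a)` is bounded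
below; hence the constant `ρ = ∫ h dλ` can be pulled out of the infimum defining `T h x = h x`,
which is the optimality equation. Existence and uniqueness of `h` is Banach's fixed point theorem
on the complete space `C_b(X)`. -/

theorem existsUnique_isFixedPt_of_dist_le_mul {α : Type*} [MetricSpace α] [CompleteSpace α]
    [Nonempty α] {f : α → α} {K : ℝ} (hK : K < 1)
    (hf : ∀ x y, dist (f x) (f y) ≤ K * dist x y) : ∃! x, f x = x :=
  have hcontr : ContractingWith K.toNNReal f :=
    ⟨Real.toNNReal_lt_one.mpr hK, LipschitzWith.of_dist_le' hf⟩
  ⟨hcontr.fixedPoint, hcontr.fixedPoint_isFixedPt, fun _ hx => hcontr.fixedPoint_unique hx⟩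

lemma neg_norm_le_integral {X : Type*} [MeasurableSpace X] [TopologicalSpace X]
    (μ : Measure X) [IsProbabilityMeasure μ] (u : X →ᵇ ℝ) : -‖u‖ ≤ ∫ y, u y ∂μ := by
  have h := norm_integral_le_of_norm_le_const (μ := μ) (ae_of_all _ u.norm_coe_le_norm)
  rw [probReal_univ, mul_one, Real.norm_eq_abs] at h
  exact neg_le_of_abs_le h

lemma bddBelow_range_apply_add_integral {X A : Type*} [MeasurableSpace X] [TopologicalSpace X]
    [MeasurableSpace A] [TopologicalSpace A] (c : X × A →ᵇ ℝ) (p : Kernel (X × A) X)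
    [IsMarkovKernel p] (u : X →ᵇ ℝ) (x : X) :
    BddBelow (Set.range fun a => c (x, a) + ∫ y, u y ∂p (x, a)) := by
  refine ⟨-‖c‖ - ‖u‖, ?_⟩
  rintro _ ⟨a, rfl⟩
  linarith [c.neg_norm_le_apply (x, a), neg_norm_le_integral (p (x, a)) u]

theorem stmt1_general
    {X A : Type*}
    [MetricSpace X]
    [MeasurableSpace X]
    [MetricSpace A] [Nonempty A]
    [MeasurableSpace A]
    (p : Kernel (X × A) X) [IsMarkovKernel p]
    (c : BoundedContinuousFunction (X × A) ℝ)
    (lam : Measure X)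
    (T : BoundedContinuousFunction X ℝ → BoundedContinuousFunction X ℝ)
    (hT : ∀ u x, T u x =
      ⨅ a : A, (c (x, a) + ∫ y, u y ∂(p (x, a)) - ∫ y, u y ∂lam))
    (hbeta : 1 - (lam Set.univ).toReal < 1)
    (hcontr : ∀ u v, dist (T u) (T v) ≤ (1 - (lam Set.univ).toReal) * dist u v) :
    (∃! h : BoundedContinuousFunction X ℝ, T h = h) ∧
      ∀ h : BoundedContinuousFunction X ℝ, T h = h →
        ∀ x, h x + ∫ y, h y ∂lam =
          ⨅ a : A, (c (x, a) + ∫ y, h y ∂(p (x, a))) := by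
  refine ⟨existsUnique_isFixedPt_of_dist_le_mul hbeta hcontr, fun h hfix x => ?_⟩
  have hx := hT h x
  rw [hfix, ← ciInf_sub (bddBelow_range_apply_add_integral c p h x)] at hx
  rw [hx, sub_add_cancel]

/-- The contraction `T` has a unique fixed point `h ∈ C_b(X)`, and any fixed
point satisfies the average cost optimality equation
`h(x) + ρ = min_a [c(x,a) + ∫ h dp(·|x,a)]` with `ρ = ∫ h dλ`. -/
theorem stmt1
    {X A : Type*}
    [MetricSpace X] [CompleteSpace X] [TopologicalSpace.SeparableSpace X]
    [MeasurableSpace X] [BorelSpace X]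
    [MetricSpace A] [CompactSpace A] [Nonempty A]
    [MeasurableSpace A] [BorelSpace A]
    (p : Kernel (X × A) X) [IsMarkovKernel p]
    (c : BoundedContinuousFunction (X × A) ℝ)
    (hc_nonneg : ∀ z, 0 ≤ c z)
    (lam : Measure X) [IsFiniteMeasure lam]
    (hlam_sub : lam Set.univ ≤ 1)
    (hlam_ne : lam ≠ 0)
    (hp_cont : ∀ u : BoundedContinuousFunction X ℝ,
      Continuous fun z : X × A => ∫ y, u y ∂(p z))
    (hminor : ∀ z : X × A, ∀ B : Set X, MeasurableSet B → lam B ≤ p z B)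
    (T : BoundedContinuousFunction X ℝ → BoundedContinuousFunction X ℝ)
    (hT : ∀ u x, T u x =
      ⨅ a : A, (c (x, a) + ∫ y, u y ∂(p (x, a)) - ∫ y, u y ∂lam))
    (hbeta : 1 - (lam Set.univ).toReal < 1)
    (hcontr : ∀ u v, dist (T u) (T v) ≤ (1 - (lam Set.univ).toReal) * dist u v) :
    (∃! h : BoundedContinuousFunction X ℝ, T h = h) ∧
      ∀ h : BoundedContinuousFunction X ℝ, T h = h →
        ∀ x, h x + ∫ y, h y ∂lam =
          ⨅ a : A, (c (x, a) + ∫ y, h y ∂(p (x, a))) :=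
  stmt1_general p c lam T hT hbeta hcontr
end

section
/- Suppose h ∈ C_b(X) satisfies h(x) + ρ = min_{a∈A}[c(x,a) + ∫ h(y) p(dy|x,a)] for all x, where ρ ∈ ℝ. Then for every policy π (a stochastic kernel on A given X) and every initial distribution, the long-run average cost J(π) = limsup_{T→∞} (1/T) E^π[Σ_{t=0}^{T−1} c(x(t),a(t))] satisfies J(π) ≥ ρ. -/
open MeasureTheory ProbabilityTheory BoundedContinuousFunction Filter

/-- If `h ∈ C_b(X)` satisfies the ACOE `h(x) + ρ = min_a [c(x,a) + ∫ h dp(·|x,a)]`,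
then for every policy `π` and every initial distribution, the long-run average cost is at
least `ρ`.  Here the process induced by the policy is described through the laws
`ν t` of the state-action pair `(x(t),a(t))`: `ν t = (law of x(t)) ⊗ π` and the state law
flows according to `p`. -/
theorem stmt2
    {X A : Type*}
    [MetricSpace X] [CompleteSpace X] [TopologicalSpace.SeparableSpace X]
    [MeasurableSpace X] [BorelSpace X]
    [MetricSpace A] [CompactSpace A] [Nonempty A]
    [MeasurableSpace A] [BorelSpace A]
    (p : Kernel (X × A) X) [IsMarkovKernel p]
    (c : X × A → ℝ) (hc_meas : Measurable c)
    (M : ℝ) (hc_bdd : ∀ z, |c z| ≤ M) (hc_nonneg : ∀ z, 0 ≤ c z)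
    (h : BoundedContinuousFunction X ℝ) (ρ : ℝ)
    (hACOE : ∀ x, h x + ρ = ⨅ a : A, (c (x, a) + ∫ y, h y ∂(p (x, a))))
    (π : Kernel X A) [IsMarkovKernel π]
    (ν : ℕ → Measure (X × A)) (hprob : ∀ t, IsProbabilityMeasure (ν t))
    (hpol : ∀ t, ν t = ((ν t).map Prod.fst).compProd π)
    (hflow : ∀ t, (ν (t + 1)).map Prod.fst = (ν t).bind p) :
    ρ ≤ Filter.atTop.limsup
      (fun T : ℕ => (∑ t ∈ Finset.range T, ∫ z, c z ∂(ν t)) / T) := by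
  have hprob' := hprob
  set μ : ℕ → Measure X := fun t => (ν t).map Prod.fst with hμdef
  have hμprob : ∀ t, IsProbabilityMeasure (μ t) := fun t => by
    haveI := hprob t
    exact Measure.isProbabilityMeasure_map measurable_fst.aemeasurable
  -- bound on integrals of h against probability measures
  have habs : ∀ (m : Measure X) [IsProbabilityMeasure m], |∫ x, h x ∂m| ≤ ‖h‖ := by
    intro m hm
    calc |∫ x, h x ∂m| = ‖∫ x, h x ∂m‖ := rfl
      _ ≤ ‖h‖ * (m Set.univ).toReal :=
        norm_integral_le_of_norm_le_const (Filter.Eventually.of_forall fun x =>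
          h.norm_coe_le_norm x)
      _ = ‖h‖ := by simp
  -- pointwise inequality from the ACOE
  have hpt : ∀ z : X × A, h z.1 + ρ ≤ c z + ∫ y, h y ∂(p z) := by
    rintro ⟨x, a⟩
    rw [hACOE x]
    refine ciInf_le ⟨-‖h‖, ?_⟩ a
    rintro r ⟨b, rfl⟩
    have h1 : -‖h‖ ≤ ∫ y, h y ∂(p (x, b)) := by
      have := habs (p (x, b))
      linarith [abs_le.mp this]
    have := hc_nonneg (x, b)
    dsimp only
    linarith
  -- integrability facts
  have hint_c : ∀ t, Integrable c (ν t) := fun t => by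
    haveI := hprob t
    exact ⟨hc_meas.aestronglyMeasurable,
      HasFiniteIntegral.of_bounded (C := M) (Filter.Eventually.of_forall fun z => by
        simpa [Real.norm_eq_abs] using hc_bdd z)⟩
  have hg_sm : StronglyMeasurable fun z : X × A => ∫ y, h y ∂(p z) := by
    have : StronglyMeasurable fun w : (X × A) × X => h w.2 :=
      (h.continuous.comp continuous_snd).stronglyMeasurable
    exact this.integral_kernel_prod_right'
  have hint_g : ∀ t, Integrable (fun z : X × A => ∫ y, h y ∂(p z)) (ν t) := fun t => by
    haveI := hprob t
    refine ⟨hg_sm.aestronglyMeasurable,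
      HasFiniteIntegral.of_bounded (C := ‖h‖) (Filter.Eventually.of_forall fun z => ?_)⟩
    simpa [Real.norm_eq_abs] using habs (p z)
  have hint_hfst : ∀ t, Integrable (fun z : X × A => h z.1) (ν t) := fun t => by
    haveI := hprob t
    refine ⟨(h.continuous.comp continuous_fst).stronglyMeasurable.aestronglyMeasurable,
      HasFiniteIntegral.of_bounded (C := ‖h‖) (Filter.Eventually.of_forall fun z => ?_)⟩
    exact h.norm_coe_le_norm z.1
  -- the key one-step inequality
  have key : ∀ t, ρ + ∫ x, h x ∂(μ t) ≤ (∫ z, c z ∂(ν t)) + ∫ x, h x ∂(μ (t + 1)) := by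
    intro t
    haveI := hprob t
    have h1 : ∫ z, (h z.1 + ρ) ∂(ν t) ≤ ∫ z, (c z + ∫ y, h y ∂(p z)) ∂(ν t) :=
      integral_mono ((hint_hfst t).add (integrable_const ρ))
        ((hint_c t).add (hint_g t)) hpt
    have h2 : ∫ z, (h z.1 + ρ) ∂(ν t) = (∫ x, h x ∂(μ t)) + ρ := by
      rw [integral_add (hint_hfst t) (integrable_const ρ), integral_const]
      simp [hμdef, integral_map measurable_fst.aemeasurable
        h.continuous.aestronglyMeasurable]
    have h3 : ∫ z, (c z + ∫ y, h y ∂(p z)) ∂(ν t)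
        = (∫ z, c z ∂(ν t)) + ∫ z, (∫ y, h y ∂(p z)) ∂(ν t) :=
      integral_add (hint_c t) (hint_g t)
    have hbind : (ν t).bind p = ((ν t) ⊗ₘ p).map Prod.snd := by
      ext s hs
      rw [Measure.map_apply measurable_snd hs,
        Measure.compProd_apply (measurable_snd hs),
        Measure.bind_apply hs p.measurable.aemeasurable]
      rfl
    have h4 : ∫ z, (∫ y, h y ∂(p z)) ∂(ν t) = ∫ x, h x ∂(μ (t + 1)) := by
      rw [hμdef]
      simp only
      rw [hflow t, hbind,
        integral_map measurable_snd.aemeasurable h.continuous.aestronglyMeasurable]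
      rw [Measure.integral_compProd]
      exact ⟨(h.continuous.comp continuous_snd).stronglyMeasurable.aestronglyMeasurable,
        HasFiniteIntegral.of_bounded (C := ‖h‖) (Filter.Eventually.of_forall fun w =>
          h.norm_coe_le_norm w.2)⟩
    rw [h2, h3, h4] at h1
    linarith
  -- telescoping
  have sum_key : ∀ T : ℕ, T * ρ + ∫ x, h x ∂(μ 0)
      ≤ (∑ t ∈ Finset.range T, ∫ z, c z ∂(ν t)) + ∫ x, h x ∂(μ T) := by
    intro T
    induction T with
    | zero => simp
    | succ n ih =>
      rw [Finset.sum_range_succ]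
      push_cast
      have := key n
      linarith
  -- bound on the cost integrals for boundedness of the limsup sequence
  have hcost_le : ∀ t, ∫ z, c z ∂(ν t) ≤ M := fun t => by
    haveI := hprob t
    calc ∫ z, c z ∂(ν t) ≤ ∫ _z, M ∂(ν t) :=
          integral_mono (hint_c t) (integrable_const M) fun z => (abs_le.mp (hc_bdd z)).2
      _ = M := by simp
  set f : ℕ → ℝ := fun T => (∑ t ∈ Finset.range T, ∫ z, c z ∂(ν t)) / T with hfdef
  have hf_le : ∀ T, f T ≤ max M 0 := by
    intro T
    rcases Nat.eq_zero_or_pos T with rfl | hT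
    · simp [hfdef]
    · have hTpos : (0 : ℝ) < T := by exact_mod_cast hT
      rw [hfdef]
      rw [div_le_iff₀ hTpos]
      calc (∑ t ∈ Finset.range T, ∫ z, c z ∂(ν t)) ≤ ∑ _t ∈ Finset.range T, M :=
            Finset.sum_le_sum fun t _ => hcost_le t
        _ = T * M := by simp [mul_comm]
        _ ≤ max M 0 * T := by
            have : M ≤ max M 0 := le_max_left _ _
            nlinarith
  -- lower bound f T ≥ ρ - 2‖h‖ / T for T ≥ 1
  have hf_ge : ∀ T : ℕ, 1 ≤ T → ρ - 2 * ‖h‖ / T ≤ f T := by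
    intro T hT
    have hTpos : (0 : ℝ) < T := by exact_mod_cast hT
    have h0 := habs (μ 0)
    have hTm := habs (μ T)
    have := sum_key T
    rw [hfdef]
    rw [sub_le_iff_le_add, ← add_div, le_div_iff₀ hTpos]
    have := abs_le.mp h0
    have := abs_le.mp hTm
    nlinarith [sum_key T]
  -- conclude via limsup
  have hg_tendsto : Tendsto (fun T : ℕ => ρ - 2 * ‖h‖ / T) atTop (nhds ρ) := by
    have : Tendsto (fun T : ℕ => 2 * ‖h‖ / T) atTop (nhds 0) := by
      have := (tendsto_one_div_atTop_nhds_zero_nat).const_mul ((2:ℝ) * ‖h‖)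
      simpa [div_eq_mul_inv, mul_assoc] using this
    simpa using tendsto_const_nhds.sub this
  have hlim : Filter.atTop.limsup (fun T : ℕ => ρ - 2 * ‖h‖ / T) = ρ :=
    hg_tendsto.limsup_eq
  calc ρ = Filter.atTop.limsup (fun T : ℕ => ρ - 2 * ‖h‖ / T) := hlim.symm
    _ ≤ Filter.atTop.limsup f := by
        refine Filter.limsup_le_limsup ?_ ?_ ?_
        · filter_upwards [Filter.eventually_ge_atTop 1] with T hT
          exact hf_ge T hT
        · exact hg_tendsto.isBoundedUnder_ge.isCoboundedUnder_le
        · exact ⟨max M 0, Filter.eventually_map.mpr (Filter.Eventually.of_forall hf_le)⟩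
end

section
/- Let h ∈ C_b(X) satisfy the average cost optimality equation h(x) + ρ = min_{a∈A}[c(x,a) + ∫ h dp(·|x,a)]. Let π be a policy such that the induced kernel P_π(·|x) = ∫_A p(·|x,a) π(da|x) admits an invariant probability measure μ_π, and suppose ν_π(dx,da) = μ_π(dx)π(da|x) concentrates on the set {(x,a) : c(x,a) + ∫ h dp(·|x,a) = h(x) + ρ}. Then the average cost of π started from μ_π equals ρ, i.e., π is average-cost optimal. -/
open MeasureTheory ProbabilityTheory BoundedContinuousFunction Filter

/-- If `h ∈ C_b(X)` satisfies the ACOE with constant `ρ`, `μ_π` is invariant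
for the kernel `P_π(·|x) = ∫_A p(·|x,a) π(da|x)`, and `ν_π = μ_π ⊗ π` concentrates on the
set of minimizers of the ACOE, then the (stationary) average cost of `π` started from
`μ_π`, namely `∫ c dν_π`, equals `ρ`; i.e. `π` is average-cost optimal. -/
theorem stmt3
    {X A : Type*}
    [MetricSpace X] [CompleteSpace X] [TopologicalSpace.SeparableSpace X]
    [MeasurableSpace X] [BorelSpace X]
    [MetricSpace A] [CompactSpace A] [Nonempty A]
    [MeasurableSpace A] [BorelSpace A]
    (p : Kernel (X × A) X) [IsMarkovKernel p]
    (hp_cont : ∀ u : BoundedContinuousFunction X ℝ,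
      Continuous fun z : X × A => ∫ y, u y ∂(p z))
    (c : BoundedContinuousFunction (X × A) ℝ) (hc_nonneg : ∀ z, 0 ≤ c z)
    (h : BoundedContinuousFunction X ℝ) (ρ : ℝ)
    (hACOE : ∀ x, h x + ρ = ⨅ a : A, (c (x, a) + ∫ y, h y ∂(p (x, a))))
    (π : Kernel X A) [IsMarkovKernel π]
    (μπ : Measure X) [IsProbabilityMeasure μπ]
    (hinv : μπ.bind (fun x => (π x).bind (fun a => p (x, a))) = μπ)
    (hconc : (μπ.compProd π)
      {z : X × A | c z + ∫ y, h y ∂(p z) = h z.1 + ρ} = 1) :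
    ∫ z, c z ∂(μπ.compProd π) = ρ := by
  classical
  set ν := μπ.compProd π with hν
  set G : X × A → ℝ := fun z => ∫ y, h y ∂(p z) with hGdef
  have hGcont : Continuous G := hp_cont h
  have hGm : Measurable G := hGcont.measurable
  have hGbound : ∀ z, ‖G z‖ ≤ ‖h‖ := by
    intro z
    have := norm_integral_le_of_norm_le_const
      (μ := p z) (f := fun y => h y) (C := ‖h‖)
      (Filter.Eventually.of_forall fun y => h.norm_coe_le_norm y)
    simpa [measure_univ] using this
  -- a.e. identity from concentration
  have hscl : IsClosed {z : X × A | c z + G z = h z.1 + ρ} := by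
    have : {z : X × A | c z + G z = h z.1 + ρ}
        = (fun z => (c z + G z) - (h z.1 + ρ)) ⁻¹' {0} := by
      ext z; simp [sub_eq_zero]
    rw [this]
    exact IsClosed.preimage
      (((c.continuous.add hGcont).sub
        ((h.continuous.comp continuous_fst).add continuous_const))) isClosed_singleton
  have hsm : MeasurableSet {z : X × A | c z + G z = h z.1 + ρ} := hscl.measurableSet
  have hae : ∀ᵐ z ∂ν, c z = h z.1 + ρ - G z := by
    have h0 : ν {z : X × A | c z + G z = h z.1 + ρ}ᶜ = 0 :=
      (prob_compl_eq_zero_iff hsm).mpr hconc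
    refine (ae_iff.2 ?_)
    have hsub : {z : X × A | ¬ c z = h z.1 + ρ - G z}
        ⊆ {z : X × A | c z + G z = h z.1 + ρ}ᶜ := by
      intro z hz hz'
      exact hz (by simp only [Set.mem_setOf_eq] at hz'; linarith)
    exact measure_mono_null hsub h0
  -- integrabilities
  have hInt1 : Integrable (fun z : X × A => h z.1) ν := by
    have : Integrable (fun z : X × A => (h.compContinuous
        ⟨Prod.fst, continuous_fst⟩ : BoundedContinuousFunction (X × A) ℝ) z) ν :=
      BoundedContinuousFunction.integrable ν _
    simpa using this
  have hIntG : Integrable G ν :=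
    (integrable_const ‖h‖).mono' hGm.aestronglyMeasurable
      (Filter.Eventually.of_forall fun z => by simpa using hGbound z)
  -- claim 1 : ∫ h∘fst dν = ∫ h dμ
  have claim1 : ∫ z, h z.1 ∂ν = ∫ x, h x ∂μπ := by
    rw [hν, MeasureTheory.Measure.integral_compProd hInt1]
    simp [measure_univ]
  -- measurability of the composed kernel
  have hpm : ∀ x : X, Measurable (fun a : A => p (x, a)) :=
    fun x => p.measurable.comp measurable_prodMk_left
  have hHm : Measurable fun x : X => ENNReal.ofReal (h x + ‖h‖) :=
    (h.continuous.measurable.add_const _).ennreal_ofReal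
  have hm_meas : Measurable (fun x : X => (π x).bind (fun a => p (x, a))) := by
    apply Measure.measurable_of_measurable_coe
    intro s hs
    simp_rw [Measure.bind_apply hs (hpm _).aemeasurable]
    exact Measurable.lintegral_kernel_prod_right (κ := π)
      ((p.measurable_coe hs) : Measurable (Function.uncurry fun x a => p (x, a) s))
  have hnonneg : ∀ x, (0:ℝ) ≤ h x + ‖h‖ := fun x => by
    have := abs_le.mp (le_trans (le_of_eq (Real.norm_eq_abs (h x)).symm) (h.norm_coe_le_norm x))
    linarith [this.1]
  -- key lintegral identity from invariance
  have key : ∫⁻ x, ENNReal.ofReal (h x + ‖h‖) ∂μπ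
      = ∫⁻ z, ENNReal.ofReal (G z + ‖h‖) ∂ν := by
    conv_lhs => rw [← hinv]
    rw [Measure.lintegral_bind hm_meas.aemeasurable hHm.aemeasurable, hν,
      Measure.lintegral_compProd ((hGm.add_const _).ennreal_ofReal)]
    refine lintegral_congr fun x => ?_
    rw [Measure.lintegral_bind (hpm x).aemeasurable hHm.aemeasurable]
    refine lintegral_congr fun a => ?_
    have hib : Integrable (fun y => h y + ‖h‖) (p (x, a)) :=
      (BoundedContinuousFunction.integrable _ h).add (integrable_const _)
    rw [← ofReal_integral_eq_lintegral_ofReal hib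
      (Filter.Eventually.of_forall fun y => hnonneg y)]
    congr 1
    rw [integral_add (BoundedContinuousFunction.integrable _ h) (integrable_const _),
      integral_const, probReal_univ]
    simp [hGdef]
  -- convert the key lintegral identity to Bochner integrals
  have conv1 : ∫ z, (G z + ‖h‖) ∂ν = (∫⁻ z, ENNReal.ofReal (G z + ‖h‖) ∂ν).toReal := by
    rw [integral_eq_lintegral_of_nonneg_ae
      (Filter.Eventually.of_forall fun z => by
        have := abs_le.mp (le_trans (le_of_eq (Real.norm_eq_abs (G z)).symm) (hGbound z))
        show (0:ℝ) ≤ G z + ‖h‖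
        linarith [this.1])
      ((hGm.add_const _).aestronglyMeasurable)]
  have conv2 : ∫ x, (h x + ‖h‖) ∂μπ = (∫⁻ x, ENNReal.ofReal (h x + ‖h‖) ∂μπ).toReal := by
    rw [integral_eq_lintegral_of_nonneg_ae
      (Filter.Eventually.of_forall fun x => by show (0:ℝ) ≤ h x + ‖h‖; exact hnonneg x)
      ((h.continuous.measurable.add_const _).aestronglyMeasurable)]
  have claim2 : ∫ z, G z ∂ν = ∫ x, h x ∂μπ := by
    have e1 : ∫ z, (G z + ‖h‖) ∂ν = ∫ z, G z ∂ν + ‖h‖ := by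
      rw [integral_add hIntG (integrable_const _), integral_const, probReal_univ]; simp
    have e2 : ∫ x, (h x + ‖h‖) ∂μπ = ∫ x, h x ∂μπ + ‖h‖ := by
      rw [integral_add (BoundedContinuousFunction.integrable _ h) (integrable_const _),
        integral_const, probReal_univ]; simp
    have := congrArg ENNReal.toReal key
    rw [← conv1, ← conv2, e1, e2] at this
    linarith
  -- finish
  calc ∫ z, c z ∂ν = ∫ z, (h z.1 + ρ - G z) ∂ν := integral_congr_ae hae
    _ = (∫ z, h z.1 ∂ν + ρ) - ∫ z, G z ∂ν := by
        rw [integral_sub (f := fun z : X × A => h z.1 + ρ)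
            (by exact hInt1.add (integrable_const ρ)) hIntG,
          integral_add (f := fun z : X × A => h z.1) (g := fun _ => ρ)
            hInt1 (integrable_const ρ), integral_const, probReal_univ]
        simp
    _ = ρ := by rw [claim1, claim2]; ring
end

section
/- Let g_n, g : E → ℝ be measurable functions on a metric space E such that g_n converges to g continuously (i.e., g_n(e_n) → g(e) whenever e_n → e) and the g_n are uniformly bounded, and let μ_n → μ weakly in P(E). Then ∫ g_n dμ_n → ∫ g dμ. -/
open MeasureTheory Filter Topology Set

/-- Diagonal lemma: if `g n → glim` continuously, then for any strictly monotone
subsequence `φ` and any sequence `y N → x`, we have `g (φ N) (y N) → glim x`. -/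
lemma keyDiag {E : Type*} [MetricSpace E]
    (g : ℕ → E → ℝ) (glim : E → ℝ)
    (hcc : ∀ (e : ℕ → E) (l : E), Tendsto e atTop (𝓝 l) →
      Tendsto (fun n => g n (e n)) atTop (𝓝 (glim l)))
    (x : E) (φ : ℕ → ℕ) (hφ : StrictMono φ) (y : ℕ → E)
    (hy : Tendsto y atTop (𝓝 x)) :
    Tendsto (fun N => g (φ N) (y N)) atTop (𝓝 (glim x)) := by
  classical
  set z : ℕ → E := fun n => if h : ∃ N, φ N = n then y h.choose else x with hz
  have hzφ : ∀ N, z (φ N) = y N := by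
    intro N
    have h : ∃ N', φ N' = φ N := ⟨N, rfl⟩
    simp only [hz, dif_pos h]
    exact congrArg y (hφ.injective h.choose_spec)
  have hztend : Tendsto z atTop (𝓝 x) := by
    rw [tendsto_atTop'] at hy ⊢
    intro s hs
    obtain ⟨K, hK⟩ := hy s hs
    refine ⟨φ K, fun n hn => ?_⟩
    by_cases h : ∃ N, φ N = n
    · simp only [hz, dif_pos h]
      apply hK
      have h1 : φ h.choose = n := h.choose_spec
      have h2 : φ K ≤ φ h.choose := by rw [h1]; exact hn
      exact hφ.le_iff_le.mp h2
    · simp only [hz, dif_neg h]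
      exact mem_of_mem_nhds hs
  have h := (hcc z x hztend).comp hφ.tendsto_atTop
  exact h.congr fun N => by simp [Function.comp, hzφ]

/-- Continuous convergence implies continuity of the limit. -/
lemma glimCont {E : Type*} [MetricSpace E]
    (g : ℕ → E → ℝ) (glim : E → ℝ)
    (hcc : ∀ (e : ℕ → E) (l : E), Tendsto e atTop (𝓝 l) →
      Tendsto (fun n => g n (e n)) atTop (𝓝 (glim l))) :
    Continuous glim := by
  rw [continuous_iff_seqContinuous]
  intro e x he
  have hev : ∀ k : ℕ, ∀ᶠ n in atTop,
      dist (g n (e k)) (glim (e k)) < 1 / ((k : ℝ) + 1) := by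
    intro k
    have h := hcc (fun _ => e k) (e k) tendsto_const_nhds
    exact Metric.tendsto_nhds.mp h (1 / ((k : ℝ) + 1)) (by positivity)
  obtain ⟨φ, hφ, hP⟩ := extraction_forall_of_eventually hev
  have h1 := keyDiag g glim hcc x φ hφ e he
  have h2 : Tendsto (fun k => dist (g (φ k) (e k)) (glim (e k))) atTop (𝓝 0) :=
    squeeze_zero (fun _ => dist_nonneg) (fun k => (hP k).le)
      tendsto_one_div_add_atTop_nhds_zero_nat
  exact h1.congr_dist h2

/-- If `g n → g` continuously with the `g n` uniformly bounded and measurable,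
and `μ n → μ` weakly in `P(E)`, then `∫ g n dμ n → ∫ g dμ`. -/
theorem stmt8
    {E : Type*} [MetricSpace E] [MeasurableSpace E] [BorelSpace E]
    (g : ℕ → E → ℝ) (glim : E → ℝ)
    (hmeas : ∀ n, Measurable (g n)) (hmeas' : Measurable glim)
    (M : ℝ) (hbd : ∀ n x, |g n x| ≤ M)
    (hcc : ∀ (e : ℕ → E) (l : E), Tendsto e atTop (𝓝 l) →
      Tendsto (fun n => g n (e n)) atTop (𝓝 (glim l)))
    (μ : ℕ → ProbabilityMeasure E) (μlim : ProbabilityMeasure E)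
    (hμ : Tendsto μ atTop (𝓝 μlim)) :
    Tendsto (fun n => ∫ x, g n x ∂(μ n : Measure E)) atTop
      (𝓝 (∫ x, glim x ∂(μlim : Measure E))) := by
  classical
  have hE : Nonempty E := by
    by_contra h
    rw [not_nonempty_iff] at h
    have h1 : (μlim : Measure E) univ = 1 := measure_univ
    rw [Set.univ_eq_empty_iff.mpr h, measure_empty] at h1
    exact zero_ne_one h1
  have hM : 0 ≤ M := le_trans (abs_nonneg _) (hbd 0 hE.some)
  have hglim_bd : ∀ x, |glim x| ≤ M := by
    intro x
    have h := (hcc (fun _ => x) x tendsto_const_nhds).abs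
    exact le_of_tendsto h (Eventually.of_forall fun n => hbd n x)
  have hgc : Continuous glim := glimCont g glim hcc
  -- integrability
  have hintb : ∀ (f : E → ℝ) (ν : ProbabilityMeasure E), Measurable f →
      (∀ x, |f x| ≤ M) → Integrable f (ν : Measure E) := by
    intro f ν hf hb
    exact (integrable_const M).mono' hf.aestronglyMeasurable
      (ae_of_all _ fun x => by simpa [Real.norm_eq_abs] using hb x)
  -- second part: ∫ glim dμ n → ∫ glim dμlim
  set f : BoundedContinuousFunction E ℝ := BoundedContinuousFunction.ofNormedAddCommGroup glim hgc M
    (fun x => by simpa [Real.norm_eq_abs] using hglim_bd x) with hf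
  have h2 : Tendsto (fun n => ∫ x, glim x ∂(μ n : Measure E)) atTop
      (𝓝 (∫ x, glim x ∂(μlim : Measure E))) := by
    have h := ProbabilityMeasure.tendsto_iff_forall_integral_tendsto.mp hμ f
    simpa [hf] using h
  -- first part: ∫ g n dμ n − ∫ glim dμ n → 0
  have h1 : Tendsto (fun n => (∫ x, g n x ∂(μ n : Measure E))
      - ∫ x, glim x ∂(μ n : Measure E)) atTop (𝓝 0) := by
    rw [NormedAddCommGroup.tendsto_nhds_zero]
    intro ε hε
    set δ : ℝ := ε / (2 * (2 * M + 1)) with hδ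
    have hδpos : 0 < δ := by positivity
    set K : ℕ → Set E := fun N =>
      closure {x | ∃ m, N ≤ m ∧ δ ≤ dist (g m x) (glim x)} with hK
    have hK_closed : ∀ N, IsClosed (K N) := fun N => isClosed_closure
    have hK_anti : Antitone K := by
      intro N N' hNN'
      apply closure_mono
      rintro x ⟨m, hm, hmd⟩
      exact ⟨m, le_trans hNN' hm, hmd⟩
    have hK_empty : (⋂ N, K N) = ∅ := by
      rw [Set.eq_empty_iff_forall_notMem]
      intro x hx
      rw [Set.mem_iInter] at hx
      have hfreq : ∀ N : ℕ, ∃ᶠ m in atTop, ∃ y,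
          dist y x < 1 / ((N : ℝ) + 1) ∧ δ ≤ dist (g m y) (glim y) := by
        intro N
        rw [frequently_atTop]
        intro b
        have hxb := hx b
        rw [hK, Metric.mem_closure_iff] at hxb
        obtain ⟨y, hy, hyd⟩ := hxb (1 / ((N : ℝ) + 1)) (by positivity)
        obtain ⟨m, hm, hmd⟩ := hy
        exact ⟨m, hm, y, by rwa [dist_comm], hmd⟩
      obtain ⟨φ, hφ, hP⟩ := extraction_forall_of_frequently hfreq
      choose y hy1 hy2 using hP
      have hyx : Tendsto y atTop (𝓝 x) := by
        rw [tendsto_iff_dist_tendsto_zero]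
        exact squeeze_zero (fun _ => dist_nonneg) (fun N => (hy1 N).le)
          tendsto_one_div_add_atTop_nhds_zero_nat
      have hd1 := keyDiag g glim hcc x φ hφ y hyx
      have hd2 : Tendsto (fun N => glim (y N)) atTop (𝓝 (glim x)) :=
        (hgc.tendsto x).comp hyx
      have hd3 : Tendsto (fun N => dist (g (φ N) (y N)) (glim (y N)))
          atTop (𝓝 0) := by
        simpa using hd1.dist hd2
      have : δ ≤ 0 := ge_of_tendsto hd3 (Eventually.of_forall hy2)
      linarith
    have htends : Tendsto (fun N => (μlim : Measure E) (K N)) atTop (𝓝 0) := by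
      have h := tendsto_measure_iInter_atTop (μ := (μlim : Measure E))
        (fun N => (hK_closed N).measurableSet.nullMeasurableSet) hK_anti
        ⟨0, measure_ne_top _ _⟩
      rw [hK_empty] at h
      simpa [Function.comp_def] using h
    have hδ0 : (0 : ENNReal) < ENNReal.ofReal δ := ENNReal.ofReal_pos.mpr hδpos
    obtain ⟨N₀, hN₀⟩ := (htends.eventually_lt_const hδ0).exists
    have hlimsup := ProbabilityMeasure.limsup_measure_closed_le_of_tendsto hμ
      (hK_closed N₀)
    have hev : ∀ᶠ n in atTop, (μ n : Measure E) (K N₀) < ENNReal.ofReal δ :=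
      eventually_lt_of_limsup_lt (lt_of_le_of_lt hlimsup hN₀)
    filter_upwards [hev, eventually_ge_atTop N₀] with n hn hnN
    have hptwise : ∀ x, |g n x - glim x| ≤
        (K N₀).indicator (fun _ => 2 * M) x + δ := by
      intro x
      by_cases hxK : x ∈ K N₀
      · rw [Set.indicator_of_mem hxK]
        have := abs_sub (g n x) (glim x)
        have h1 := hbd n x
        have h2 := hglim_bd x
        have h3 : |g n x - glim x| ≤ |g n x| + |glim x| := abs_sub _ _
        linarith
      · rw [Set.indicator_of_notMem hxK]
        have hxK' : x ∉ {x | ∃ m, N₀ ≤ m ∧ δ ≤ dist (g m x) (glim x)} :=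
          fun h => hxK (subset_closure h)
        simp only [Set.mem_setOf_eq, not_exists, not_and, not_le] at hxK'
        have := hxK' n hnN
        rw [Real.dist_eq] at this
        linarith
    have hint1 : Integrable (g n) (μ n : Measure E) := hintb _ _ (hmeas n) (hbd n)
    have hint2 : Integrable glim (μ n : Measure E) := hintb _ _ hmeas' hglim_bd
    have hintR : Integrable (fun x => (K N₀).indicator (fun _ => 2 * M) x + δ)
        (μ n : Measure E) := by
      apply Integrable.add _ (integrable_const δ)
      exact (integrable_const (2 * M)).indicator (hK_closed N₀).measurableSet
    have hmsmall : ((μ n : Measure E) (K N₀)).toReal < δ :=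
      ENNReal.toReal_lt_of_lt_ofReal hn
    calc ‖(∫ x, g n x ∂(μ n : Measure E)) - ∫ x, glim x ∂(μ n : Measure E)‖
        = ‖∫ x, (g n x - glim x) ∂(μ n : Measure E)‖ := by
          rw [integral_sub hint1 hint2]
      _ ≤ ∫ x, |g n x - glim x| ∂(μ n : Measure E) := by
          simpa [Real.norm_eq_abs] using
            norm_integral_le_integral_norm (μ := (μ n : Measure E))
              (fun x => g n x - glim x)
      _ ≤ ∫ x, ((K N₀).indicator (fun _ => 2 * M) x + δ) ∂(μ n : Measure E) := by
          apply integral_mono (hint1.sub hint2).abs hintR hptwise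
      _ = ((μ n : Measure E) (K N₀)).toReal * (2 * M) + δ := by
          rw [integral_add ((integrable_const (2 * M)).indicator
            (hK_closed N₀).measurableSet) (integrable_const δ)]
          rw [integral_indicator_const _ (hK_closed N₀).measurableSet]
          simp [smul_eq_mul, mul_comm]
          exact Or.inl rfl
      _ < ε := by
          have hle : ((μ n : Measure E) (K N₀)).toReal * (2 * M) ≤ δ * (2 * M) :=
            mul_le_mul_of_nonneg_right hmsmall.le (by positivity)
          have : δ * (2 * M + 1) = ε / 2 := by
            rw [hδ]; field_simp
          nlinarith
  have := h1.add h2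
  simpa using this
end

section
/- Let ξ_n → ξ weakly in P(E) for a metric space E, and let F_n, F, h_n, h : E → ℝ be continuous functions with F_n → F and h_n → h continuously, F ≥ h pointwise. If ξ_n({z : F_n(z) = h_n(z)}) = 1 for all n, then ξ({z : F(z) = h(z)}) = 1. -/
open MeasureTheory Filter Topology

/-- If `ξ n → ξ` weakly, `F n → F` and `h n → h` continuously (all functions
continuous), `F ≥ h` pointwise, and `ξ n ({F n = h n}) = 1` for all `n`, then
`ξ ({F = h}) = 1`. -/
theorem stmt12
    {E : Type*} [MetricSpace E] [MeasurableSpace E] [BorelSpace E]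
    (F : ℕ → E → ℝ) (Flim : E → ℝ) (h : ℕ → E → ℝ) (hlim : E → ℝ)
    (hFcont : ∀ n, Continuous (F n)) (hFlimcont : Continuous Flim)
    (hhcont : ∀ n, Continuous (h n)) (hhlimcont : Continuous hlim)
    (hFcc : ∀ (e : ℕ → E) (l : E), Tendsto e atTop (𝓝 l) →
      Tendsto (fun n => F n (e n)) atTop (𝓝 (Flim l)))
    (hhcc : ∀ (e : ℕ → E) (l : E), Tendsto e atTop (𝓝 l) →
      Tendsto (fun n => h n (e n)) atTop (𝓝 (hlim l)))
    (hge : ∀ z, hlim z ≤ Flim z)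
    (ξ : ℕ → ProbabilityMeasure E) (ξlim : ProbabilityMeasure E)
    (hξ : Tendsto ξ atTop (𝓝 ξlim))
    (hconc : ∀ n, (ξ n : Measure E) {z : E | F n z = h n z} = 1) :
    (ξlim : Measure E) {z : E | Flim z = hlim z} = 1 := by
  set G : E → ℝ := fun z => Flim z - hlim z with hGdef
  have hGcont : Continuous G := hFlimcont.sub hhlimcont
  -- Main step: for every ε > 0, the open set {ε < G} is ξlim-null.
  have key : ∀ ε : ℝ, 0 < ε → (ξlim : Measure E) {z | ε < G z} = 0 := by
    intro ε hε
    set C : Set E := {z | ε ≤ G z} with hCdef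
    have hCclosed : IsClosed C := isClosed_le continuous_const hGcont
    set S : ℕ → Set E := fun k => closure (⋃ n ∈ Set.Ici k, ({z | F n z = h n z} ∩ C))
      with hSdef
    have hSclosed : ∀ k, IsClosed (S k) := fun k => isClosed_closure
    have hSanti : Antitone S := by
      intro k k' hkk'
      apply closure_mono
      apply Set.iUnion₂_mono'
      intro n hn
      exact ⟨n, le_trans hkk' hn, subset_rfl⟩
    -- (3): the intersection of the S k is empty.
    have hempty : (⋂ k, S k) = (∅ : Set E) := by
      by_contra hne
      obtain ⟨z, hz⟩ := Set.nonempty_iff_ne_empty.mpr hne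
      simp only [Set.mem_iInter] at hz
      classical
      -- choice of approximating points
      have hex : ∀ k : ℕ, ∃ p : ℕ × E, k ≤ p.1 ∧ F p.1 p.2 = h p.1 p.2 ∧ p.2 ∈ C ∧
          dist p.2 z < 1 / (k + 1) := by
        intro k
        have hzk := hz k
        rw [hSdef] at hzk
        have hpos : (0 : ℝ) < 1 / (k + 1) := by positivity
        obtain ⟨y, hy, hdy⟩ := Metric.mem_closure_iff.mp hzk _ hpos
        simp only [Set.mem_iUnion, Set.mem_Ici, Set.mem_inter_iff, Set.mem_setOf_eq] at hy
        obtain ⟨n, hn, hFn, hC⟩ := hy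
        exact ⟨(n, y), hn, hFn, hC, by rwa [dist_comm] at hdy⟩
      -- recursive construction making indices strictly increasing
      let f : ℕ → ℕ × E := fun k =>
        Nat.rec (Classical.choose (hex 0))
          (fun _ p => Classical.choose (hex (p.1 + 1))) k
      set N : ℕ → ℕ := fun k => (f k).1 with hNdef
      set Y : ℕ → E := fun k => (f k).2 with hYdef
      have h0 := Classical.choose_spec (hex 0)
      have hsuc : ∀ k, N k + 1 ≤ N (k + 1) ∧ F (N (k+1)) (Y (k+1)) = h (N (k+1)) (Y (k+1)) ∧
          Y (k+1) ∈ C ∧ dist (Y (k+1)) z < 1 / (((N k + 1 : ℕ) : ℝ) + 1) := by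
        intro k
        exact Classical.choose_spec (hex ((f k).1 + 1))
      have hNmono : StrictMono N := strictMono_nat_of_lt_succ fun k => (hsuc k).1
      have hNge : ∀ k, k ≤ N k := fun k => hNmono.le_apply
      have hYC : ∀ k, Y k ∈ C := by
        intro k
        cases k with
        | zero => exact h0.2.2.1
        | succ k => exact (hsuc k).2.2.1
      have hYFh : ∀ k, F (N k) (Y k) = h (N k) (Y k) := by
        intro k
        cases k with
        | zero => exact h0.2.1
        | succ k => exact (hsuc k).2.1
      have hYz : Tendsto Y atTop (𝓝 z) := by
        rw [Metric.tendsto_atTop]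
        intro δ hδ
        obtain ⟨K, hK⟩ := exists_nat_one_div_lt hδ
        refine ⟨K + 1, fun k hk => ?_⟩
        obtain ⟨k', rfl⟩ := Nat.exists_eq_add_of_le (Nat.one_le_iff_ne_zero.mpr
          (by omega) : 1 ≤ k)
        have hk' : K ≤ k' := by omega
        have hb := (hsuc k').2.2.2
        have hNk : (K : ℝ) + 1 ≤ ((N k' + 1 : ℕ) : ℝ) + 1 := by
          push_cast
          have hK' : (K : ℝ) ≤ k' := by exact_mod_cast hk'
          have h2 : (k' : ℝ) ≤ N k' := by exact_mod_cast hNge k'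
          linarith
        have : (1 : ℝ) / (((N k' + 1 : ℕ) : ℝ) + 1) ≤ 1 / (K + 1) :=
          one_div_le_one_div_of_le (by positivity) hNk
        have : dist (Y (k' + 1)) z < 1 / (K + 1) := lt_of_lt_of_le hb this
        calc dist (Y (1 + k')) z = dist (Y (k' + 1)) z := by rw [Nat.add_comm]
          _ < 1 / (K + 1) := this
          _ < δ := hK
      -- interleaved sequence
      set e : ℕ → E := fun m => if hm : ∃ k, N k = m then Y (Nat.find hm) else z with hedef
      have heY : ∀ k, e (N k) = Y k := by
        intro k
        have hm : ∃ k', N k' = N k := ⟨k, rfl⟩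
        have : Nat.find hm = k := hNmono.injective (Nat.find_spec hm)
        simp only [hedef, dif_pos hm, this]
      have hez : Tendsto e atTop (𝓝 z) := by
        rw [Metric.tendsto_atTop]
        intro δ hδ
        obtain ⟨K, hK⟩ := (Metric.tendsto_atTop.mp hYz) δ hδ
        refine ⟨N K + 1, fun m hm => ?_⟩
        by_cases hmm : ∃ k, N k = m
        · have hspec := Nat.find_spec hmm
          have hKfind : K ≤ Nat.find hmm := by
            by_contra hlt
            push_neg at hlt
            have : N (Nat.find hmm) < N K := hNmono hlt
            omega
          simp only [hedef, dif_pos hmm]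
          exact hK _ hKfind
        · simp only [hedef, dif_neg hmm]
          simpa using hδ
      -- continuous convergence along the subsequence N
      have hGlim : Tendsto (fun m => F m (e m) - h m (e m)) atTop (𝓝 (G z)) :=
        (hFcc e z hez).sub (hhcc e z hez)
      have hsub : Tendsto (fun k => F (N k) (e (N k)) - h (N k) (e (N k))) atTop
          (𝓝 (G z)) := hGlim.comp hNmono.tendsto_atTop
      have hzero : ∀ k, F (N k) (e (N k)) - h (N k) (e (N k)) = 0 := by
        intro k
        rw [heY k, hYFh k, sub_self]
      have hGz0 : G z = 0 := by
        have := hsub.congr' (Eventually.of_forall fun k => hzero k)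
        exact (tendsto_nhds_unique tendsto_const_nhds this).symm
      have hzC : z ∈ C := hCclosed.mem_of_tendsto hYz (Eventually.of_forall hYC)
      rw [hCdef] at hzC
      simp only [Set.mem_setOf_eq, hGz0] at hzC
      linarith
    -- (1): ξ n C ≤ ξ n (S k) for n ≥ k
    have hmeas_eq : ∀ n, (ξ n : Measure E) {z : E | F n z = h n z}ᶜ = 0 := by
      intro n
      have hmeasA : MeasurableSet {z : E | F n z = h n z} :=
        (isClosed_eq (hFcont n) (hhcont n)).measurableSet
      exact (prob_compl_eq_zero_iff hmeasA).mpr (hconc n)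
    have h1 : ∀ k n, k ≤ n → (ξ n : Measure E) C ≤ (ξ n : Measure E) (S k) := by
      intro k n hkn
      have hsubset : C ⊆ S k ∪ {z : E | F n z = h n z}ᶜ := by
        intro x hx
        by_cases hfx : F n x = h n x
        · left
          apply subset_closure
          exact Set.mem_biUnion hkn ⟨hfx, hx⟩
        · right; exact hfx
      calc (ξ n : Measure E) C ≤ (ξ n : Measure E) (S k ∪ {z : E | F n z = h n z}ᶜ) :=
            measure_mono hsubset
        _ ≤ (ξ n : Measure E) (S k) + (ξ n : Measure E) {z : E | F n z = h n z}ᶜ :=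
            measure_union_le _ _
        _ = (ξ n : Measure E) (S k) := by rw [hmeas_eq n, add_zero]
    -- (2): limsup ξ n C ≤ ξlim (S k) for each k
    have h2 : ∀ k, (atTop : Filter ℕ).limsup (fun n => (ξ n : Measure E) C) ≤
        (ξlim : Measure E) (S k) := by
      intro k
      have hev : (fun n => (ξ n : Measure E) C) ≤ᶠ[atTop]
          fun n => (ξ n : Measure E) (S k) :=
        eventually_atTop.mpr ⟨k, fun n hn => h1 k n hn⟩
      exact le_trans (limsup_le_limsup hev)
        (ProbabilityMeasure.limsup_measure_closed_le_of_tendsto hξ (hSclosed k))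
    -- (4): ξlim (S k) → 0
    have h4 : Tendsto (fun k => (ξlim : Measure E) (S k)) atTop (𝓝 0) := by
      have ht := tendsto_measure_iInter_atTop (μ := (ξlim : Measure E))
        (fun k => (hSclosed k).measurableSet.nullMeasurableSet) hSanti
        ⟨0, measure_ne_top _ _⟩
      rw [hempty] at ht
      simpa [Function.comp_def] using ht
    have h5 : (atTop : Filter ℕ).limsup (fun n => (ξ n : Measure E) C) = 0 :=
      le_antisymm (ge_of_tendsto' h4 h2) zero_le
    -- Portmanteau for the open set, and conclude
    have hopen : IsOpen {z : E | ε < G z} := isOpen_lt continuous_const hGcont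
    have h6 := ProbabilityMeasure.le_liminf_measure_open_of_tendsto hξ hopen
    have h7 : (atTop : Filter ℕ).liminf (fun n => (ξ n : Measure E) {z | ε < G z}) ≤
        (atTop : Filter ℕ).limsup (fun n => (ξ n : Measure E) C) := by
      refine le_trans (liminf_le_liminf (Eventually.of_forall fun n => ?_)) liminf_le_limsup
      refine measure_mono fun x hx => ?_
      simp only [hCdef, Set.mem_setOf_eq] at hx ⊢
      exact le_of_lt hx
    have := le_trans h6 (le_trans h7 (le_of_eq h5))
    exact le_antisymm this zero_le
  -- Conclude: the complement of {Flim = hlim} is a countable union of null sets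
  have hclosed : IsClosed {z : E | Flim z = hlim z} := isClosed_eq hFlimcont hhlimcont
  rw [← prob_compl_eq_zero_iff hclosed.measurableSet]
  have hsub : {z : E | Flim z = hlim z}ᶜ ⊆ ⋃ m : ℕ, {z : E | 1 / ((m : ℝ) + 1) < G z} := by
    intro z hz
    simp only [Set.mem_compl_iff, Set.mem_setOf_eq] at hz
    have hpos : 0 < G z := sub_pos.mpr (lt_of_le_of_ne (hge z) (Ne.symm hz))
    obtain ⟨m, hm⟩ := exists_nat_one_div_lt hpos
    exact Set.mem_iUnion.mpr ⟨m, hm⟩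
  have hnull : (ξlim : Measure E) (⋃ m : ℕ, {z : E | 1 / ((m : ℝ) + 1) < G z}) = 0 :=
    measure_iUnion_null fun m => key _ (by positivity)
  exact le_antisymm (le_trans (measure_mono hsub) (le_of_eq hnull)) zero_le
end

section
/- Suppose two stochastic kernels on Polish space X given X satisfy P_i(·|x) ≥ λ(·) for i = 1, 2, with λ a nonzero sub-probability measure, and each has a (unique) invariant probability measure μ_i. If P₁ = P₂, then μ₁ = μ₂; more generally, the invariant-measure map P ↦ μ_P is well-defined on the set of kernels satisfying this minorization, and if bounded continuous kernels P_n → P in the sense that P_n(·|x_n) → P(·|x) weakly whenever x_n → x, and μ_{P_n} → μ weakly, then μ = μ_P. -/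
/-!
Uniqueness is Doeblin's argument. Let `S` be a Hahn set of `α - β` for two invariant laws. Since
`P x S ≤ 1 - λ Sᶜ` for every `x`, one step of `P` contracts the excess `α S - β S` by the factor
`1 - λ Sᶜ`; doing the same with `α, β, S` replaced by `β, α, Sᶜ`, and using `λ S + λ Sᶜ > 0`, the
excess vanishes.

Closedness of the graph: for bounded continuous `f`, invariance gives `∫ f dμₙ = ∫ Pₙf dμₙ`.
Continuous convergence `Pₙf(xₙ) → Pf(x)` forces `|Pₙf - Pf| ≤ δ` for `n ≥ N` outside closed sets
`F_N` decreasing to `∅`; by the portmanteau theorem `μₙ(F_N)` is eventually small, so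
`∫ (Pₙf - Pf) dμₙ → 0`, whence `∫ f dμ = ∫ Pf dμ = ∫ f d(μP)`.
-/

open MeasureTheory ProbabilityTheory Filter Topology ENNReal NNReal BoundedContinuousFunction

lemma ENNReal.eq_zero_of_le_one_sub_mul {a c : ℝ≥0∞} (ha : a ≠ ∞) (hc : c ≠ 0)
    (h : a ≤ (1 - c) * a) : a = 0 := by
  by_contra ha0
  have hlt : (1 - c) * a < 1 * a :=
    ENNReal.mul_lt_mul_left ha0 ha (ENNReal.sub_lt_self one_ne_top one_ne_zero hc)
  rw [one_mul] at hlt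
  exact (h.trans_lt hlt).false

section ContinuousConvergence

variable {X Y : Type*} [TopologicalSpace X] [TopologicalSpace Y]

lemma exists_tendsto_comp_eq_of_strictMono {m : ℕ → ℕ} (hm : StrictMono m) {y : ℕ → X} {x : X}
    (hy : Tendsto y atTop (𝓝 x)) : ∃ xs : ℕ → X, Tendsto xs atTop (𝓝 x) ∧ xs ∘ m = y := by
  classical
  let xs : ℕ → X := fun n => if h : ∃ k, m k = n then y h.choose else x
  have hxs : ∀ k, xs (m k) = y k := fun k => by
    have h : ∃ j, m j = m k := ⟨k, rfl⟩
    simp only [xs, dif_pos h, hm.injective h.choose_spec]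
  refine ⟨xs, fun V hV => ?_, funext hxs⟩
  obtain ⟨K, hK⟩ := eventually_atTop.mp (hy hV)
  refine eventually_atTop.mpr ⟨m K, fun n hn => ?_⟩
  by_cases h : ∃ k, m k = n
  · obtain ⟨k, rfl⟩ := h
    rw [hxs]
    exact hK k (hm.le_iff_le.mp hn)
  · simp only [xs, dif_neg h]
    exact mem_of_mem_nhds hV

lemma tendsto_uncurry_atTop_nhds_of_seq [FirstCountableTopology X] {h : ℕ → X → Y} {x : X}
    {y : Y} (hh : ∀ xs : ℕ → X, Tendsto xs atTop (𝓝 x) →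
      Tendsto (fun n => h n (xs n)) atTop (𝓝 y)) :
    Tendsto (Function.uncurry h) (atTop ×ˢ 𝓝 x) (𝓝 y) := by
  refine tendsto_of_subseq_tendsto fun p hp => ?_
  obtain ⟨φ, hφ, hm⟩ := strictMono_subseq_of_tendsto_atTop (tendsto_fst.comp hp)
  obtain ⟨xs, hxs, hcomp⟩ :=
    exists_tendsto_comp_eq_of_strictMono hm ((tendsto_snd.comp hp).comp hφ.tendsto_atTop)
  refine ⟨φ, ((hh xs hxs).comp hm.tendsto_atTop).congr fun n => ?_⟩
  simpa [Function.uncurry_def] using congrArg (h (p (φ n)).1) (congrFun hcomp n)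

end ContinuousConvergence

namespace MeasureTheory

variable {X E : Type*} [MeasurableSpace X] [NormedAddCommGroup E] [NormedSpace ℝ E]

lemma lintegral_le_mul_sub_add {μ ν : Measure X} [IsFiniteMeasure ν] (hνμ : ν ≤ μ)
    {f : X → ℝ≥0∞} {c : ℝ≥0∞} (hf : ∀ x, f x ≤ c) :
    ∫⁻ x, f x ∂μ ≤ c * (μ Set.univ - ν Set.univ) + ∫⁻ x, f x ∂ν := by
  calc ∫⁻ x, f x ∂μ = ∫⁻ x, f x ∂(μ - ν) + ∫⁻ x, f x ∂ν := by
        rw [← lintegral_add_measure, Measure.sub_add_cancel_of_le hνμ]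
    _ ≤ ∫⁻ _, c ∂(μ - ν) + ∫⁻ x, f x ∂ν := by gcongr; exact hf _
    _ = c * (μ Set.univ - ν Set.univ) + ∫⁻ x, f x ∂ν := by
        rw [lintegral_const, Measure.sub_apply .univ hνμ]

lemma IsHahnDecomposition.eq_of_measure_eq {μ ν : Measure X} [IsProbabilityMeasure μ]
    [IsProbabilityMeasure ν] {S : Set X} (h : IsHahnDecomposition μ ν S) (hS : μ S = ν S) :
    μ = ν := by
  have hSc : μ Sᶜ = ν Sᶜ := by
    rw [prob_compl_eq_one_sub h.measurableSet, prob_compl_eq_one_sub h.measurableSet, hS]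
  have hrS : μ.restrict S = ν.restrict S :=
    Measure.eq_of_le_of_measure_univ_eq h.le_on (by simp [hS])
  have hrSc : ν.restrict Sᶜ = μ.restrict Sᶜ :=
    Measure.eq_of_le_of_measure_univ_eq h.ge_on_compl (by simp [hSc])
  rw [← Measure.restrict_add_restrict_compl (μ := μ) h.measurableSet,
    ← Measure.restrict_add_restrict_compl (μ := ν) h.measurableSet, hrS, hrSc]

lemma norm_integral_le_add_mul_measureReal {μ : Measure X} [IsProbabilityMeasure μ] {h : X → E}
    (hint : Integrable h μ) {F : Set X} (hF : MeasurableSet F) {δ C : ℝ} (hδ : 0 ≤ δ)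
    (hδF : ∀ x ∉ F, ‖h x‖ ≤ δ) (hC : ∀ x, ‖h x‖ ≤ C) :
    ‖∫ x, h x ∂μ‖ ≤ δ + C * μ.real F := by
  rw [← integral_add_compl hF hint]
  calc ‖∫ x in F, h x ∂μ + ∫ x in Fᶜ, h x ∂μ‖
      ≤ ‖∫ x in F, h x ∂μ‖ + ‖∫ x in Fᶜ, h x ∂μ‖ := norm_add_le _ _
    _ ≤ C * μ.real F + δ * μ.real Fᶜ :=
        add_le_add (norm_setIntegral_le_of_norm_le_const (measure_lt_top _ _) fun x _ => hC x)
          (norm_setIntegral_le_of_norm_le_const (measure_lt_top _ _) hδF)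
    _ ≤ C * μ.real F + δ := by gcongr; exact mul_le_of_le_one_right hδ measureReal_le_one
    _ = δ + C * μ.real F := add_comm _ _

lemma tendsto_integral_of_tendsto_uncurry [TopologicalSpace X] [OpensMeasurableSpace X]
    [HasOuterApproxClosed X] {μs : ℕ → ProbabilityMeasure X} {μ : ProbabilityMeasure X}
    (hμ : Tendsto μs atTop (𝓝 μ)) {h : ℕ → X → E} (hint : ∀ n, Integrable (h n) (μs n))
    {C : ℝ≥0} (hC : ∀ n x, ‖h n x‖ ≤ C)
    (hh : ∀ x, Tendsto (Function.uncurry h) (atTop ×ˢ 𝓝 x) (𝓝 0)) :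
    Tendsto (fun n => ∫ x, h n x ∂(μs n)) atTop (𝓝 0) := by
  rw [NormedAddGroup.tendsto_nhds_zero]
  intro ε hε
  set δ : ℝ := ε / (2 * (1 + C)) with hδ_def
  have hδ : 0 < δ := by positivity
  let F : ℕ → Set X := fun N => closure {x | ∃ m ≥ N, δ < ‖h m x‖}
  have hF_anti : Antitone F := fun N N' hNN' =>
    closure_mono fun x ⟨m, hm, hx⟩ => ⟨m, hNN'.trans hm, hx⟩
  have hF_empty : ⋂ N, F N = ∅ := by
    refine Set.eq_empty_of_forall_notMem fun x hx => ?_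
    obtain ⟨pa, hpa, pb, hpb, hsmall⟩ :=
      eventually_prod_iff.mp ((hh x).eventually (Metric.closedBall_mem_nhds 0 hδ))
    obtain ⟨N, hN⟩ := eventually_atTop.mp hpa
    obtain ⟨y, hy, m, hm, hbig⟩ := mem_closure_iff_nhds.mp (Set.mem_iInter.mp hx N) _ hpb
    exact (hbig.trans_le (mem_closedBall_zero_iff.mp (hsmall (hN m hm) hy))).false
  have hμF : Tendsto (fun N => (μ : Measure X) (F N)) atTop (𝓝 0) := by
    have := tendsto_measure_iInter_atTop (μ := μ)
      (fun N => isClosed_closure.measurableSet.nullMeasurableSet) hF_anti ⟨0, measure_ne_top _ _⟩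
    rwa [hF_empty, measure_empty] at this
  obtain ⟨N, hN⟩ := (hμF.eventually (gt_mem_nhds (ofReal_pos.mpr hδ))).exists
  have hμsF : ∀ᶠ n in atTop, (μs n : Measure X) (F N) < ENNReal.ofReal δ :=
    eventually_lt_of_limsup_lt
      ((ProbabilityMeasure.limsup_measure_closed_le_of_tendsto hμ isClosed_closure).trans_lt hN)
  filter_upwards [hμsF, eventually_ge_atTop N] with n hn hNn
  have hδF : ∀ x ∉ F N, ‖h n x‖ ≤ δ := fun x hx =>
    not_lt.mp fun hbig => hx (subset_closure ⟨n, hNn, hbig⟩)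
  calc ‖∫ x, h n x ∂(μs n)‖ ≤ δ + C * (μs n : Measure X).real (F N) :=
        norm_integral_le_add_mul_measureReal (hint n) isClosed_closure.measurableSet hδ.le hδF
          (hC n)
    _ ≤ δ + C * δ := by gcongr; exact toReal_le_of_le_ofReal hδ.le hn.le
    _ = ε / 2 := by rw [hδ_def]; field_simp
    _ < ε := half_lt_self hε

namespace Measure

variable {Y : Type*} [MeasurableSpace Y]

lemma integral_bind {κ : Kernel X Y} {μ : Measure X} {f : Y → E}
    (hf : Integrable f (μ.bind κ)) : ∫ y, f y ∂(μ.bind κ) = ∫ x, ∫ y, f y ∂κ x ∂μ := by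
  rw [Measure.comp_eq_comp_const_apply] at hf ⊢
  simpa using Kernel.integral_comp hf

end Measure

end MeasureTheory

namespace ProbabilityTheory.Kernel

section Minorization

variable {X : Type*} [MeasurableSpace X] {lam : Measure X} {P : Kernel X X}

lemma apply_le_one_sub_of_minorized [IsMarkovKernel P] (hP : ∀ x, lam ≤ P x) (x : X)
    {S : Set X} (hS : MeasurableSet S) : P x S ≤ 1 - lam Sᶜ := by
  have hSc : lam Sᶜ ≤ P x Sᶜ := hP x Sᶜ
  refine ENNReal.le_sub_of_add_le_right (ne_top_of_le_ne_top (by simp) hSc) ?_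
  calc P x S + lam Sᶜ ≤ P x S + P x Sᶜ := by gcongr
    _ = 1 := by rw [measure_add_measure_compl hS, measure_univ]

lemma Invariant.apply_eq_lintegral {μ : Measure X} (hμ : P.Invariant μ) {S : Set X}
    (hS : MeasurableSet S) : μ S = ∫⁻ x, P x S ∂μ := by
  conv_lhs => rw [← hμ.def]
  exact Measure.bind_apply hS P.aemeasurable

lemma Invariant.sub_le_one_sub_mul_sub [IsMarkovKernel P] (hP : ∀ x, lam ≤ P x)
    {α β : Measure X} [IsFiniteMeasure α] [IsFiniteMeasure β]
    (hα : P.Invariant α) (hβ : P.Invariant β) {S : Set X} (hS : IsHahnDecomposition β α S) :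
    α S - β S ≤ (1 - lam Sᶜ) * (α S - β S) := by
  have hmeas := hS.measurableSet
  refine tsub_le_iff_right.mpr ?_
  calc α S = ∫⁻ x, P x S ∂(α.restrict S) + ∫⁻ x, P x S ∂(α.restrict Sᶜ) := by
        rw [← lintegral_add_measure, Measure.restrict_add_restrict_compl hmeas,
          hα.apply_eq_lintegral hmeas]
    _ ≤ ((1 - lam Sᶜ) * (α S - β S) + ∫⁻ x, P x S ∂(β.restrict S))
          + ∫⁻ x, P x S ∂(β.restrict Sᶜ) := by
        gcongr ?_ + ?_
        · simpa using lintegral_le_mul_sub_add hS.le_on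
            (apply_le_one_sub_of_minorized hP · hmeas)
        · exact lintegral_mono' hS.ge_on_compl le_rfl
    _ = (1 - lam Sᶜ) * (α S - β S) + β S := by
        rw [add_assoc, ← lintegral_add_measure, Measure.restrict_add_restrict_compl hmeas,
          hβ.apply_eq_lintegral hmeas]

lemma Invariant.eq_of_isHahnDecomposition [IsMarkovKernel P] (hP : ∀ x, lam ≤ P x)
    {α β : Measure X} [IsProbabilityMeasure α] [IsProbabilityMeasure β]
    (hα : P.Invariant α) (hβ : P.Invariant β) {S : Set X} (hS : IsHahnDecomposition β α S)
    (hlam : lam Sᶜ ≠ 0) : β = α := by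
  have hsub : α S - β S = 0 :=
    ENNReal.eq_zero_of_le_one_sub_mul (by finiteness) hlam (hα.sub_le_one_sub_mul_sub hP hβ hS)
  exact hS.eq_of_measure_eq
    (le_antisymm (by simpa using hS.le_on Set.univ) (tsub_eq_zero_iff_le.mp hsub))

theorem Invariant.eq_of_minorized [IsMarkovKernel P] (hP : ∀ x, lam ≤ P x) (hlam : lam ≠ 0)
    {α β : Measure X} [IsProbabilityMeasure α] [IsProbabilityMeasure β]
    (hα : P.Invariant α) (hβ : P.Invariant β) : α = β := by
  obtain ⟨S, hS⟩ := exists_isHahnDecomposition β α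
  by_cases hSc : lam Sᶜ = 0
  · have hlamS : lam S ≠ 0 := fun hS0 => hlam <| Measure.measure_univ_eq_zero.mp <| by
      rw [← measure_add_measure_compl hS.measurableSet, hS0, hSc, add_zero]
    exact hβ.eq_of_isHahnDecomposition hP hα hS.compl (by rwa [compl_compl])
  · exact (hα.eq_of_isHahnDecomposition hP hβ hS hSc).symm

end Minorization

section WeakConvergence

variable {X : Type*} [MeasurableSpace X] [TopologicalSpace X]

lemma integrable_integral_boundedContinuousFunction [OpensMeasurableSpace X] (κ : Kernel X X)
    [IsMarkovKernel κ] (μ : Measure X) [IsFiniteMeasure μ] (f : X →ᵇ ℝ) :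
    Integrable (fun x => ∫ y, f y ∂κ x) μ :=
  .of_bound f.continuous.stronglyMeasurable.integral_kernel.aestronglyMeasurable ‖f‖
    (ae_of_all _ fun x => f.norm_integral_le_norm (κ x))

lemma integral_bind_boundedContinuousFunction [OpensMeasurableSpace X] (κ : Kernel X X)
    [IsMarkovKernel κ] (μ : Measure X) [IsProbabilityMeasure μ] (f : X →ᵇ ℝ) :
    ∫ y, f y ∂(μ.bind κ) = ∫ x, ∫ y, f y ∂κ x ∂μ :=
  Measure.integral_bind (f.integrable _)

theorem Invariant.of_tendsto [BorelSpace X] [HasOuterApproxClosed X] [FirstCountableTopology X]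
    {κs : ℕ → Kernel X X} {κ : Kernel X X} [∀ n, IsMarkovKernel (κs n)] [IsMarkovKernel κ]
    (hκ : ∀ f : X →ᵇ ℝ, Continuous fun x => ∫ y, f y ∂κ x)
    (hκs : ∀ (xs : ℕ → X) (x : X), Tendsto xs atTop (𝓝 x) → ∀ f : X →ᵇ ℝ,
      Tendsto (fun n => ∫ y, f y ∂κs n (xs n)) atTop (𝓝 (∫ y, f y ∂κ x)))
    {μs : ℕ → ProbabilityMeasure X} {μ : ProbabilityMeasure X} (hμ : Tendsto μs atTop (𝓝 μ))
    (hinv : ∀ n, (κs n).Invariant (μs n)) : κ.Invariant μ := by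
  refine ext_of_forall_integral_eq_of_IsFiniteMeasure fun f => ?_
  have hweak := ProbabilityMeasure.tendsto_iff_forall_integral_tendsto.mp hμ
  let g : X →ᵇ ℝ := .ofNormedAddCommGroup _ (hκ f) ‖f‖ fun x => f.norm_integral_le_norm (κ x)
  let gs : ℕ → X → ℝ := fun n x => ∫ y, f y ∂κs n x
  have hgs_int : ∀ n, Integrable (gs n) (μs n) := fun n =>
    integrable_integral_boundedContinuousFunction _ _ f
  have hdiff : Tendsto (fun n => ∫ x, (gs n x - g x) ∂(μs n)) atTop (𝓝 0) := by
    refine tendsto_integral_of_tendsto_uncurry hμ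
      (fun n => (hgs_int n).sub (g.integrable _)) (C := 2 * ‖f‖₊) (fun n x => ?_)
      fun x => tendsto_uncurry_atTop_nhds_of_seq fun xs hxs => ?_
    · calc ‖gs n x - g x‖ ≤ ‖gs n x‖ + ‖g x‖ := norm_sub_le _ _
        _ ≤ ‖f‖ + ‖f‖ := add_le_add (f.norm_integral_le_norm _) (f.norm_integral_le_norm _)
        _ = ↑(2 * ‖f‖₊) := by push_cast; ring
    · simpa [gs, g] using (hκs xs x hxs f).sub (((hκ f).tendsto x).comp hxs)
  have hlim_g : Tendsto (fun n => ∫ x, gs n x ∂(μs n)) atTop (𝓝 (∫ x, g x ∂μ)) := by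
    refine (zero_add (∫ x, g x ∂μ) ▸ hdiff.add (hweak g)).congr fun n => ?_
    rw [integral_sub (hgs_int n) (g.integrable _), sub_add_cancel]
  have hlim_f : Tendsto (fun n => ∫ x, gs n x ∂(μs n)) atTop (𝓝 (∫ x, f x ∂μ)) := by
    refine (hweak f).congr fun n => ?_
    rw [← integral_bind_boundedContinuousFunction, (hinv n).def]
  rw [integral_bind_boundedContinuousFunction]
  exact tendsto_nhds_unique hlim_g hlim_f

end WeakConvergence

end ProbabilityTheory.Kernel

theorem stmt16_general
    {X : Type*}
    [MetricSpace X]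
    [MeasurableSpace X] [BorelSpace X]
    (lam : Measure X)
    (hlam_ne : lam ≠ 0) :
    (∀ P₁ P₂ : Kernel X X, IsMarkovKernel P₁ → IsMarkovKernel P₂ →
      (∀ x : X, ∀ B : Set X, MeasurableSet B → lam B ≤ P₁ x B) →
      (∀ x : X, ∀ B : Set X, MeasurableSet B → lam B ≤ P₂ x B) →
      ∀ μ₁ μ₂ : Measure X, IsProbabilityMeasure μ₁ → IsProbabilityMeasure μ₂ →
        μ₁.bind P₁ = μ₁ → μ₂.bind P₂ = μ₂ → P₁ = P₂ → μ₁ = μ₂) ∧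
    (∀ (Pseq : ℕ → Kernel X X) (P : Kernel X X),
      (∀ n, IsMarkovKernel (Pseq n)) → IsMarkovKernel P →
      (∀ n x, ∀ B : Set X, MeasurableSet B → lam B ≤ Pseq n x B) →
      (∀ x, ∀ B : Set X, MeasurableSet B → lam B ≤ P x B) →
      (∀ n, ∀ f : BoundedContinuousFunction X ℝ,
        Continuous fun x => ∫ y, f y ∂(Pseq n x)) →
      (∀ f : BoundedContinuousFunction X ℝ, Continuous fun x => ∫ y, f y ∂(P x)) →
      (∀ (xs : ℕ → X) (x : X), Tendsto xs atTop (𝓝 x) →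
        ∀ f : BoundedContinuousFunction X ℝ,
          Tendsto (fun n => ∫ y, f y ∂(Pseq n (xs n))) atTop (𝓝 (∫ y, f y ∂(P x)))) →
      ∀ (μseq : ℕ → Measure X) (μ : Measure X),
        (∀ n, IsProbabilityMeasure (μseq n)) → IsProbabilityMeasure μ →
        (∀ n, (μseq n).bind (Pseq n) = μseq n) →
        (∀ f : BoundedContinuousFunction X ℝ,
          Tendsto (fun n => ∫ y, f y ∂(μseq n)) atTop (𝓝 (∫ y, f y ∂μ))) →
        μ.bind P = μ) := by
  refine ⟨fun P₁ P₂ _ _ hmin₁ _ μ₁ μ₂ _ _ hμ₁ hμ₂ hP => ?_,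
    fun Pseq P _ _ _ _ _ hP hconv μseq μ hμseq hμ hinv hweak => ?_⟩
  · subst hP
    exact Kernel.Invariant.eq_of_minorized (fun x => Measure.le_iff.mpr (hmin₁ x)) hlam_ne hμ₁ hμ₂
  · exact Kernel.Invariant.of_tendsto (μs := fun n => ⟨μseq n, hμseq n⟩) (μ := ⟨μ, hμ⟩) hP hconv
      (ProbabilityMeasure.tendsto_iff_forall_integral_tendsto.mpr hweak) hinv

/-- Under the minorization `P(·|x) ≥ λ` (λ a nonzero sub-probability),
the invariant probability measure of a kernel is unique (so `P₁ = P₂` forces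
`μ₁ = μ₂`), and the invariant-measure map has closed graph: if weakly continuous
kernels `P n → P` in the sense `P n (·|x n) → P(·|x)` weakly whenever `x n → x`, and
their invariant probability measures `μ n → μ` weakly, then `μ` is invariant for `P`. -/
theorem stmt16
    {X : Type*}
    [MetricSpace X] [CompleteSpace X] [TopologicalSpace.SeparableSpace X]
    [MeasurableSpace X] [BorelSpace X]
    (lam : Measure X) [IsFiniteMeasure lam]
    (hlam_sub : lam Set.univ ≤ 1) (hlam_ne : lam ≠ 0) :
    (∀ P₁ P₂ : Kernel X X, IsMarkovKernel P₁ → IsMarkovKernel P₂ →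
      (∀ x : X, ∀ B : Set X, MeasurableSet B → lam B ≤ P₁ x B) →
      (∀ x : X, ∀ B : Set X, MeasurableSet B → lam B ≤ P₂ x B) →
      ∀ μ₁ μ₂ : Measure X, IsProbabilityMeasure μ₁ → IsProbabilityMeasure μ₂ →
        μ₁.bind P₁ = μ₁ → μ₂.bind P₂ = μ₂ → P₁ = P₂ → μ₁ = μ₂) ∧
    (∀ (Pseq : ℕ → Kernel X X) (P : Kernel X X),
      (∀ n, IsMarkovKernel (Pseq n)) → IsMarkovKernel P →
      (∀ n x, ∀ B : Set X, MeasurableSet B → lam B ≤ Pseq n x B) →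
      (∀ x, ∀ B : Set X, MeasurableSet B → lam B ≤ P x B) →
      (∀ n, ∀ f : BoundedContinuousFunction X ℝ,
        Continuous fun x => ∫ y, f y ∂(Pseq n x)) →
      (∀ f : BoundedContinuousFunction X ℝ, Continuous fun x => ∫ y, f y ∂(P x)) →
      (∀ (xs : ℕ → X) (x : X), Tendsto xs atTop (𝓝 x) →
        ∀ f : BoundedContinuousFunction X ℝ,
          Tendsto (fun n => ∫ y, f y ∂(Pseq n (xs n))) atTop (𝓝 (∫ y, f y ∂(P x)))) →
      ∀ (μseq : ℕ → Measure X) (μ : Measure X),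
        (∀ n, IsProbabilityMeasure (μseq n)) → IsProbabilityMeasure μ →
        (∀ n, (μseq n).bind (Pseq n) = μseq n) →
        (∀ f : BoundedContinuousFunction X ℝ,
          Tendsto (fun n => ∫ y, f y ∂(μseq n)) atTop (𝓝 (∫ y, f y ∂μ))) →
        μ.bind P = μ) :=
  stmt16_general lam hlam_ne
end
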